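/- arXiv:1908.00772 — 5 statements merged into one kernel-verified Lean document; each statement's English description precedes it below -/
import Mathlib

section
/- Let X and Y be Polish spaces, let π be a Borel probability measure on X × Y, and let μ₁ be its first marginal. Then π is induced by a map (i.e. π = (id,T)♯μ₁ for some μ₁-measurable map T: X → Y) if and only if there exists a Borel measurable set Γ ⊂ X × Y with π(Γ) = 1 such that for μ₁-almost every x ∈ X there exists a unique y ∈ Y with (x,y) ∈ Γ. In that case the map T defined by this unique y = T(x) is μ₁-measurable and π = (id,T)♯μ₁. -/
open MeasureTheory Set Filter Topology ProbabilityTheory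

noncomputable section

private lemma compProd_det_eq_map {X Y : Type*} [MeasurableSpace X] [MeasurableSpace Y]
    [MeasurableSingletonClass Y]
    (μ : Measure X) [SFinite μ] {g : X → Y} (hg : Measurable g) :
    μ ⊗ₘ Kernel.deterministic g hg = μ.map (fun x => (x, g x)) := by
  ext s hs
  rw [Measure.compProd_apply hs, Measure.map_apply (measurable_id'.prodMk hg) hs]
  have h1 : ∀ x, (Kernel.deterministic g hg) x (Prod.mk x ⁻¹' s)
      = Set.indicator ((fun x => (x, g x)) ⁻¹' s) (1 : X → ENNReal) x := by
    intro x
    rw [Kernel.deterministic_apply, Measure.dirac_apply' _ (measurable_prodMk_left hs)]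
    classical
    simp only [Set.indicator_apply, Set.mem_preimage, Pi.one_apply]
  rw [lintegral_congr h1, lintegral_indicator ((measurable_id'.prodMk hg) hs)]
  simp

private lemma aux_main {X Y : Type*}
    [MeasurableSpace X] [TopologicalSpace X] [PolishSpace X] [BorelSpace X]
    [MeasurableSpace Y] [TopologicalSpace Y] [PolishSpace Y] [BorelSpace Y]
    (π : Measure (X × Y)) [IsProbabilityMeasure π]
    {Γ : Set (X × Y)} (hΓm : MeasurableSet Γ) (hΓ1 : π Γ = 1)
    (huniq : ∀ᵐ x ∂π.fst, ∃! y : Y, (x, y) ∈ Γ)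
    {T : X → Y} (hT : ∀ᵐ x ∂π.fst, (x, T x) ∈ Γ) :
    AEMeasurable T π.fst ∧ π = π.fst.map (fun x => (x, T x)) := by
  have hneXY : Nonempty (X × Y) := by
    by_contra h
    rw [not_nonempty_iff] at h
    have h1 : (1 : ENNReal) = 0 := by
      rw [← measure_univ (μ := π), Set.univ_eq_empty_iff.mpr inferInstance, measure_empty]
    exact one_ne_zero h1
  haveI : Nonempty Y := ⟨hneXY.some.2⟩
  set κ := π.condKernel with hκdef
  have hκ : π.fst ⊗ₘ κ = π := π.disintegrate π.condKernel
  have hfmeas : Measurable (fun x => κ x (Prod.mk x ⁻¹' Γ)) :=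
    Kernel.measurable_kernel_prodMk_left hΓm
  have hint : ∫⁻ x, κ x (Prod.mk x ⁻¹' Γ) ∂π.fst = 1 := by
    rw [← Measure.compProd_apply hΓm, hκ, hΓ1]
  have hle : ∀ x, κ x (Prod.mk x ⁻¹' Γ) ≤ 1 := fun x => prob_le_one
  have h1 : ∀ᵐ x ∂π.fst, κ x (Prod.mk x ⁻¹' Γ) = 1 := by
    have h0 : ∫⁻ x, (1 - κ x (Prod.mk x ⁻¹' Γ)) ∂π.fst = 0 := by
      rw [lintegral_sub hfmeas (by rw [hint]; exact ENNReal.one_ne_top) (ae_of_all _ hle),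
        hint, lintegral_one, measure_univ, tsub_self]
    have h0' := (lintegral_eq_zero_iff (measurable_const.sub hfmeas)).mp h0
    filter_upwards [h0'] with x hx
    exact le_antisymm (hle x) (tsub_eq_zero_iff_le.mp hx)
  have hdirac : ∀ᵐ x ∂π.fst, κ x = Measure.dirac (T x) := by
    filter_upwards [h1, huniq, hT] with x h1x hux hTx
    have hset : Prod.mk x ⁻¹' Γ = {T x} := by
      ext y
      simp only [mem_preimage, mem_singleton_iff]
      exact ⟨fun hy => hux.unique hy hTx, fun hy => hy ▸ hTx⟩
    have hTx1 : κ x {T x} = 1 := by rw [← hset]; exact h1x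
    ext s hs
    rw [Measure.dirac_apply' _ hs]
    by_cases hmem : T x ∈ s
    · rw [indicator_of_mem hmem]
      refine le_antisymm prob_le_one ?_
      calc (1 : ENNReal) = κ x {T x} := hTx1.symm
        _ ≤ κ x s := measure_mono (singleton_subset_iff.mpr hmem)
    · rw [indicator_of_notMem hmem]
      have hcompl : κ x {T x}ᶜ = 0 := by
        rw [measure_compl (measurableSet_singleton _) (measure_ne_top _ _), hTx1, measure_univ,
          tsub_self]
      exact measure_mono_null (subset_compl_singleton_iff.mpr hmem) hcompl
  have hTmeas : AEMeasurable T π.fst := by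
    refine NullMeasurable.aemeasurable ?_
    intro s hs
    have hmeasset : MeasurableSet {x | κ x s = 1} :=
      (κ.measurable_coe hs) (measurableSet_singleton 1)
    refine NullMeasurableSet.congr hmeasset.nullMeasurableSet ?_
    filter_upwards [hdirac] with x hx
    have hκs : κ x s = Set.indicator s (1 : Y → ENNReal) (T x) := by
      rw [hx, Measure.dirac_apply' _ hs]
    show (κ x s = 1) = (T x ∈ s)
    classical
    by_cases hm : T x ∈ s <;> simp [hκs, Set.indicator_apply, hm]
  refine ⟨hTmeas, ?_⟩
  have hgm : Measurable (hTmeas.mk T) := hTmeas.measurable_mk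
  have hTg : T =ᵐ[π.fst] hTmeas.mk T := hTmeas.ae_eq_mk
  have hdet : κ =ᵐ[π.fst] Kernel.deterministic (hTmeas.mk T) hgm := by
    filter_upwards [hdirac, hTg] with x h1x h2x
    rw [Kernel.deterministic_apply, h1x, h2x]
  calc π = π.fst ⊗ₘ κ := hκ.symm
    _ = π.fst ⊗ₘ Kernel.deterministic (hTmeas.mk T) hgm := Measure.compProd_congr hdet
    _ = π.fst.map (fun x => (x, hTmeas.mk T x)) := compProd_det_eq_map _ hgm
    _ = π.fst.map (fun x => (x, T x)) := by
        refine (Measure.map_congr ?_).symm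
        filter_upwards [hTg] with x hx
        rw [hx]

/-- Let `X, Y` be Polish spaces, `π` a Borel probability measure on `X × Y`
and `μ₁` its first marginal.  Then `π` is induced by a map `T : X → Y` (i.e.
`π = (id, T)♯ μ₁` for some `μ₁`-measurable `T`) if and only if there is a Borel set
`Γ ⊆ X × Y` of full `π`-measure such that for `μ₁`-a.e. `x` there is a unique `y` with
`(x, y) ∈ Γ`; in that case any map `T` selecting this unique point `μ₁`-a.e. is
`μ₁`-measurable and satisfies `π = (id, T)♯ μ₁`. -/
theorem inducedByMap_iff_graph {X Y : Type*}
    [MeasurableSpace X] [TopologicalSpace X] [PolishSpace X] [BorelSpace X]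
    [MeasurableSpace Y] [TopologicalSpace Y] [PolishSpace Y] [BorelSpace Y]
    (π : Measure (X × Y)) [IsProbabilityMeasure π]
    (μ₁ : Measure X) (hμ₁ : μ₁ = π.map Prod.fst) :
    ((∃ T : X → Y, AEMeasurable T μ₁ ∧ π = μ₁.map (fun x => (x, T x))) ↔
      (∃ Γ : Set (X × Y), MeasurableSet Γ ∧ π Γ = 1 ∧
        ∀ᵐ x ∂μ₁, ∃! y : Y, (x, y) ∈ Γ)) ∧
    (∀ Γ : Set (X × Y), MeasurableSet Γ → π Γ = 1 →
      (∀ᵐ x ∂μ₁, ∃! y : Y, (x, y) ∈ Γ) →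
      ∀ T : X → Y, (∀ᵐ x ∂μ₁, (x, T x) ∈ Γ) →
        AEMeasurable T μ₁ ∧ π = μ₁.map (fun x => (x, T x))) := by
  have hfst : μ₁ = π.fst := hμ₁
  subst hfst
  constructor
  · constructor
    · rintro ⟨T, hT, hπ⟩
      obtain ⟨g, hgm, hTg⟩ := hT
      have hΓm : MeasurableSet {p : X × Y | g p.1 = p.2} := by
        apply MeasureTheory.StronglyMeasurable.measurableSet_eq_fun
        · exact (hgm.comp measurable_fst).stronglyMeasurable
        · exact measurable_snd.stronglyMeasurable
      refine ⟨{p : X × Y | g p.1 = p.2}, hΓm, ?_, ?_⟩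
      · have hT' : AEMeasurable T π.fst := ⟨g, hgm, hTg⟩
        have hF : AEMeasurable (fun x => (x, T x)) π.fst := aemeasurable_id.prodMk hT'
        rw [hπ, Measure.map_apply_of_aemeasurable hF hΓm]
        have hpre : (fun x => (x, T x)) ⁻¹' {p : X × Y | g p.1 = p.2}
            = {x | g x = T x} := rfl
        rw [hpre]
        have h2 : {x | g x = T x} =ᵐ[π.fst] (univ : Set X) := by
          rw [ae_eq_univ]
          refine measure_mono_null ?_ (ae_iff.mp hTg)
          intro x hx h
          exact hx h.symm
        rw [measure_congr h2, measure_univ]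
      · exact ae_of_all _ fun x => ⟨g x, rfl, fun y hy => hy.symm⟩
    · rintro ⟨Γ, hΓm, hΓ1, huniq⟩
      have hne : Nonempty Y := by
        by_contra h
        rw [not_nonempty_iff] at h
        have h1 : (1 : ENNReal) = 0 := by
          rw [← measure_univ (μ := π), Set.univ_eq_empty_iff.mpr inferInstance, measure_empty]
        exact one_ne_zero h1
      classical
      set T : X → Y := fun x => if h : ∃ y, (x, y) ∈ Γ then h.choose else Classical.arbitrary Y
        with hTdef
      have hT : ∀ᵐ x ∂π.fst, (x, T x) ∈ Γ := by
        filter_upwards [huniq] with x hx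
        obtain ⟨y, hy, -⟩ := hx
        have hex : ∃ y, (x, y) ∈ Γ := ⟨y, hy⟩
        simp only [hTdef, dif_pos hex]
        exact hex.choose_spec
      obtain ⟨h1, h2⟩ := aux_main π hΓm hΓ1 huniq hT
      exact ⟨T, h1, h2⟩
  · intro Γ hΓm hΓ1 huniq T hT
    exact aux_main π hΓm hΓ1 huniq hT
end
end

section
/- Let Ω ⊂ ℝⁿ be a convex set and ρ a metric on Ω such that every Euclidean line segment in Ω is a geodesic of (Ω,ρ). Let φ: Ω → ℝ be 1-Lipschitz with respect to ρ, and define β: Ω² → [0,+∞] by β(x,y) := |x−y|² if φ(x) − φ(y) = ρ(x,y) and β(x,y) := +∞ otherwise. If Γ ⊂ Ω² is a β-cyclically monotone set on which β is finite, then Γ is restrictedly monotone: for all (x,y), (x′,y′) ∈ Γ with x on the Euclidean line segment [x′,y′], one has (y−y′)·(x−x′) ≥ 0. -/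
open MeasureTheory Set Metric Filter Topology ENNReal NNReal

noncomputable section

/-- `n`-dimensional Euclidean space. -/
abbrev Eucl (n : ℕ) := EuclideanSpace ℝ (Fin n)

/-- `ρ` is a metric on the set `Ω`. -/
def IsMetricOn {n : ℕ} (Ω : Set (Eucl n)) (ρ : Eucl n → Eucl n → ℝ) : Prop :=
  (∀ x ∈ Ω, ∀ y ∈ Ω, 0 ≤ ρ x y) ∧
  (∀ x ∈ Ω, ∀ y ∈ Ω, (ρ x y = 0 ↔ x = y)) ∧
  (∀ x ∈ Ω, ∀ y ∈ Ω, ρ x y = ρ y x) ∧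
  (∀ x ∈ Ω, ∀ y ∈ Ω, ∀ z ∈ Ω, ρ x z ≤ ρ x y + ρ y z)

/-- Every Euclidean line segment in `Ω` is a geodesic of `(Ω, ρ)`. -/
def SegmentsAreGeodesics {n : ℕ} (Ω : Set (Eucl n)) (ρ : Eucl n → Eucl n → ℝ) : Prop :=
  ∀ x ∈ Ω, ∀ y ∈ Ω, ∀ s ∈ Icc (0:ℝ) 1, ∀ t ∈ Icc (0:ℝ) 1,
    ρ ((1-s) • x + s • y) ((1-t) • x + t • y) = |t - s| * ρ x y

/-- The ball of `(Ω, ρ)` centred at `x` with radius `r`. -/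
def rhoBall {n : ℕ} (Ω : Set (Eucl n)) (ρ : Eucl n → Eucl n → ℝ) (x : Eucl n) (r : ℝ) :
    Set (Eucl n) :=
  {y ∈ Ω | ρ x y < r}

/-- The Lebesgue measure is locally doubling on `(Ω, ρ)`. -/
def LocallyDoubling {n : ℕ} (Ω : Set (Eucl n)) (ρ : Eucl n → Eucl n → ℝ) : Prop :=
  ∀ R > 0, ∃ C : ℝ, 1 ≤ C ∧ ∀ x ∈ Ω, ∀ r : ℝ, 0 < r → r ≤ R →
    volume (rhoBall Ω ρ x (2*r)) ≤ ENNReal.ofReal C * volume (rhoBall Ω ρ x r)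

/-- Assumption A of the paper: (i) the topology of `ρ` on `Ω` is the Euclidean one,
(ii) Euclidean segments are geodesics, (iii) Lebesgue measure is locally doubling. -/
def AssumptionA {n : ℕ} (Ω : Set (Eucl n)) (ρ : Eucl n → Eucl n → ℝ) : Prop :=
  (∀ x ∈ Ω, ∀ ε > 0, ∃ δ > 0, ∀ y ∈ Ω, dist x y < δ → ρ x y < ε) ∧
  (∀ x ∈ Ω, ∀ ε > 0, ∃ δ > 0, ∀ y ∈ Ω, ρ x y < δ → dist x y < ε) ∧
  SegmentsAreGeodesics Ω ρ ∧
  LocallyDoubling Ω ρ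

open scoped Classical RealInnerProductSpace

/-- A set `Γ` is `c`-cyclically monotone for an `[0, ∞]`-valued cost `c`: for every finite
family `(x₁,y₁), …, (x_m, y_m)` of points of `Γ`,
`∑ c(xᵢ, yᵢ) ≤ ∑ c(xᵢ, y_{i+1})` where indices are cyclic. -/
def CyclicallyMonotoneE {α : Type*} (c : α → α → ℝ≥0∞) (Γ : Set (α × α)) : Prop :=
  ∀ (m : ℕ) (p : Fin (m+1) → α × α), (∀ i, p i ∈ Γ) →
    ∑ i, c (p i).1 (p i).2 ≤ ∑ i, c (p i).1 (p (i+1)).2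

/-- The secondary cost `β` associated with a `1`-Lipschitz function `φ`. -/
def betaCost {n : ℕ} (ρ : Eucl n → Eucl n → ℝ) (φ : Eucl n → ℝ) (x y : Eucl n) : ℝ≥0∞ :=
  if φ x - φ y = ρ x y then ENNReal.ofReal (‖x - y‖^2) else ⊤

/-- Let `Ω ⊆ ℝⁿ` be convex and `ρ` a metric on `Ω` for which Euclidean
segments are geodesics.  Let `φ` be `1`-Lipschitz w.r.t. `ρ` and `β` the associated secondary
cost.  Every `β`-cyclically monotone set `Γ ⊆ Ω²` on which `β` is finite is restrictedly
monotone: if `(x,y), (x',y') ∈ Γ` and `x` lies on the segment `[x', y']`, then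
`⟪y - y', x - x'⟫ ≥ 0`. -/
theorem betaMonotone_restrictedMonotone {n : ℕ} (Ω : Set (Eucl n)) (hconv : Convex ℝ Ω)
    (ρ : Eucl n → Eucl n → ℝ) (hmet : IsMetricOn Ω ρ) (hgeo : SegmentsAreGeodesics Ω ρ)
    (φ : Eucl n → ℝ) (hφlip : ∀ x ∈ Ω, ∀ y ∈ Ω, |φ x - φ y| ≤ ρ x y)
    (Γ : Set (Eucl n × Eucl n)) (hΓΩ : Γ ⊆ Ω ×ˢ Ω)
    (hΓmono : CyclicallyMonotoneE (betaCost ρ φ) Γ)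
    (hΓfin : ∀ p ∈ Γ, betaCost ρ φ p.1 p.2 < ⊤) :
    ∀ p ∈ Γ, ∀ q ∈ Γ, p.1 ∈ segment ℝ q.1 q.2 → 0 ≤ ⟪p.2 - q.2, p.1 - q.1⟫ := by
  rintro ⟨x, y⟩ hp ⟨x', y'⟩ hq hseg
  obtain ⟨hxΩ, hyΩ⟩ := hΓΩ hp
  obtain ⟨hx'Ω, hy'Ω⟩ := hΓΩ hq
  obtain ⟨hnn, heq0, hsymm, htri⟩ := hmet
  simp only at hxΩ hyΩ hx'Ω hy'Ω ⊢
  have hxy : φ x - φ y = ρ x y := by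
    have h := hΓfin _ hp
    by_contra hc
    simp [betaCost, hc] at h
  have hx'y' : φ x' - φ y' = ρ x' y' := by
    have h := hΓfin _ hq
    by_contra hc
    simp [betaCost, hc] at h
  obtain ⟨a, b, ha, hb, hab, hx⟩ := hseg
  have ha' : a = 1 - b := by linarith
  subst ha'
  have hb1 : b ≤ 1 := by linarith
  have h1 : ρ x' x = b * ρ x' y' := by
    have h := hgeo x' hx'Ω y' hy'Ω 0 ⟨le_refl _, zero_le_one⟩ b ⟨hb, hb1⟩
    simp only [sub_zero, one_smul, zero_smul, add_zero] at h
    rw [hx, abs_of_nonneg hb] at h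
    exact h
  have h2 : ρ x y' = (1 - b) * ρ x' y' := by
    have h := hgeo x' hx'Ω y' hy'Ω b ⟨hb, hb1⟩ 1 ⟨zero_le_one, le_refl _⟩
    simp only [sub_self, one_smul, zero_smul, zero_add] at h
    rw [hx, abs_of_nonneg (by linarith : (0:ℝ) ≤ 1 - b)] at h
    exact h
  have hsum : ρ x' x + ρ x y' = ρ x' y' := by rw [h1, h2]; ring
  have l1 : φ x' - φ x ≤ ρ x' x := le_trans (le_abs_self _) (hφlip x' hx'Ω x hxΩ)
  have l2 : φ x - φ y' ≤ ρ x y' := le_trans (le_abs_self _) (hφlip x hxΩ y' hy'Ω)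
  have heq1 : φ x - φ y' = ρ x y' := by linarith
  have heqx'x : φ x' - φ x = ρ x' x := by linarith
  have l3 : φ x' - φ y ≤ ρ x' y := le_trans (le_abs_self _) (hφlip x' hx'Ω y hyΩ)
  have l4 : ρ x' y ≤ ρ x' x + ρ x y := htri x' hx'Ω x hxΩ y hyΩ
  have heq2 : φ x' - φ y = ρ x' y := by linarith
  have key := hΓmono 1 ![(x, y), (x', y')] (by
    intro i; fin_cases i <;> simpa using ‹_›)
  have e01 : ((0 : Fin 2) + 1) = 1 := rfl
  have e10 : ((1 : Fin 2) + 1) = 0 := rfl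
  rw [Fin.sum_univ_two, Fin.sum_univ_two, e01, e10] at key
  simp only [Matrix.cons_val_zero, Matrix.cons_val_one, Matrix.head_cons] at key
  rw [betaCost, betaCost, betaCost, betaCost, if_pos hxy, if_pos hx'y',
    if_pos heq1, if_pos heq2, ← ENNReal.ofReal_add (by positivity) (by positivity),
    ← ENNReal.ofReal_add (by positivity) (by positivity),
    ENNReal.ofReal_le_ofReal_iff (by positivity)] at key
  have e1 := @norm_sub_sq_real (Eucl n) _ _ x y
  have e2 := @norm_sub_sq_real (Eucl n) _ _ x' y'
  have e3 := @norm_sub_sq_real (Eucl n) _ _ x y'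
  have e4 := @norm_sub_sq_real (Eucl n) _ _ x' y
  rw [inner_sub_left, inner_sub_right, inner_sub_right]
  have c1 := real_inner_comm x y
  have c2 := real_inner_comm x' y'
  have c3 := real_inner_comm x y'
  have c4 := real_inner_comm x' y
  linarith
end
end

section
/- Let X be a Polish space, c: X² → [0,∞] a lower semi-continuous cost, and π a c-optimal transport plan between its marginals with ∫ c dπ < ∞. Then for every Borel set B ⊂ X² with π(B) > 0, the restricted measure π⌊_B is c-optimal among all finite Borel measures on X² having the same first and second marginals as π⌊_B. -/
open MeasureTheory Set Filter Topology ENNReal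

noncomputable section

/-- Let `X` be Polish, `c : X² → [0, ∞]` lower semicontinuous, and `π` a
`c`-optimal transport plan between its own marginals with finite total cost.  Then for any
Borel set `B ⊆ X²` with `π B > 0`, the restriction `π⌊B` is `c`-optimal among all finite
Borel measures on `X²` with the same marginals as `π⌊B`. -/
theorem restriction_of_optimal_is_optimal {X : Type*}
    [MeasurableSpace X] [TopologicalSpace X] [PolishSpace X] [BorelSpace X]
    (c : X → X → ℝ≥0∞) (hc : LowerSemicontinuous (fun p : X × X => c p.1 p.2))
    (π : Measure (X × X)) [IsProbabilityMeasure π]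
    (hfin : ∫⁻ p, c p.1 p.2 ∂π < ⊤)
    (hopt : ∀ π' : Measure (X × X), π'.map Prod.fst = π.map Prod.fst →
      π'.map Prod.snd = π.map Prod.snd →
      ∫⁻ p, c p.1 p.2 ∂π ≤ ∫⁻ p, c p.1 p.2 ∂π')
    (B : Set (X × X)) (hB : MeasurableSet B) (hBpos : 0 < π B) :
    ∀ σ : Measure (X × X), IsFiniteMeasure σ →
      σ.map Prod.fst = (π.restrict B).map Prod.fst →
      σ.map Prod.snd = (π.restrict B).map Prod.snd →
      ∫⁻ p, c p.1 p.2 ∂(π.restrict B) ≤ ∫⁻ p, c p.1 p.2 ∂σ := by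
  intro σ hσfin h1 h2
  set π' : Measure (X × X) := π.restrict Bᶜ + σ with hπ'
  have hsplit : π.restrict Bᶜ + π.restrict B = π := by
    rw [add_comm, Measure.restrict_add_restrict_compl hB]
  have hm1 : π'.map Prod.fst = π.map Prod.fst := by
    rw [hπ', Measure.map_add _ _ measurable_fst, h1,
      ← Measure.map_add _ _ measurable_fst, hsplit]
  have hm2 : π'.map Prod.snd = π.map Prod.snd := by
    rw [hπ', Measure.map_add _ _ measurable_snd, h2,
      ← Measure.map_add _ _ measurable_snd, hsplit]
  have hle := hopt π' hm1 hm2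
  have hdecomp : ∫⁻ p, c p.1 p.2 ∂π
      = ∫⁻ p, c p.1 p.2 ∂(π.restrict Bᶜ) + ∫⁻ p, c p.1 p.2 ∂(π.restrict B) := by
    rw [← lintegral_add_measure, hsplit]
  have hle' : ∫⁻ p, c p.1 p.2 ∂(π.restrict Bᶜ) + ∫⁻ p, c p.1 p.2 ∂(π.restrict B)
      ≤ ∫⁻ p, c p.1 p.2 ∂(π.restrict Bᶜ) + ∫⁻ p, c p.1 p.2 ∂σ := by
    rw [← hdecomp]
    calc ∫⁻ p, c p.1 p.2 ∂π ≤ ∫⁻ p, c p.1 p.2 ∂π' := hle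
      _ = _ := by rw [hπ', lintegral_add_measure]
  have hfinc : ∫⁻ p, c p.1 p.2 ∂(π.restrict Bᶜ) ≠ ⊤ := by
    refine ne_top_of_le_ne_top hfin.ne ?_
    exact lintegral_mono' Measure.restrict_le_self le_rfl
  exact (ENNReal.add_le_add_iff_left hfinc).mp hle'
end
end

section
/- Let Ω be a Polish space, and let π_k (k = 1,2,…) and π be Borel probability measures on Ω² all having the same first marginal. If π_k converges weakly to π, then for every Borel set G ⊂ Ω, the restricted measures π_k⌊_{G×Ω} converge weakly to π⌊_{G×Ω}. -/
/-!
Since all measures share the first marginal `μ`, the restricted integral `∫ f(x, y) 1_G(x) dπ_k`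
changes by at most `‖f‖ ‖1_G - g‖_{L¹(μ)}`, uniformly in `k`, when `1_G` is replaced by a function
`g`. Bounded continuous functions are dense in `L¹(μ)`, and for bounded continuous `g` the integrand
`f(x, y) g(x)` is bounded continuous, so weak convergence applies to it.
-/

open MeasureTheory Set Filter Topology

open scoped BoundedContinuousFunction

theorem tendsto_of_forall_approx {ι α : Type*} [PseudoMetricSpace α] {l : Filter ι}
    {u : ι → α} {a : α}
    (h : ∀ δ > 0, ∃ (v : ι → α) (b : α), Tendsto v l (𝓝 b) ∧ (∀ i, dist (u i) (v i) ≤ δ) ∧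
      dist a b ≤ δ) :
    Tendsto u l (𝓝 a) := by
  refine Metric.tendsto_nhds.2 fun ε hε => ?_
  obtain ⟨v, b, hvb, huv, hab⟩ := h (ε / 4) (by positivity)
  filter_upwards [Metric.tendsto_nhds.1 hvb (ε / 4) (by positivity)] with i hi
  calc dist (u i) a ≤ dist (u i) (v i) + dist (v i) b + dist a b := by
        rw [dist_comm a b]; exact dist_triangle4 _ _ _ _
    _ < ε := by linarith [huv i]

section

variable {X Y : Type*} [MeasurableSpace X] [MeasurableSpace Y]

theorem integral_restrict_preimage_eq_integral_mul_indicator {ν : Measure X} {e : X → Y}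
    (he : Measurable e) {s : Set Y} (hs : MeasurableSet s) (f : X → ℝ) :
    ∫ x, f x ∂(ν.restrict (e ⁻¹' s)) = ∫ x, f x * s.indicator 1 (e x) ∂ν := by
  rw [← integral_indicator (he hs)]
  congr 1 with x
  by_cases hx : e x ∈ s <;> simp [hx]

theorem dist_integral_mul_comp_le {ν : Measure X} {μ : Measure Y} {e : X → Y}
    (he : AEMeasurable e ν) (hνμ : ν.map e = μ) {f : X → ℝ} (hf : AEStronglyMeasurable f ν)
    {C : ℝ} (hfC : ∀ x, ‖f x‖ ≤ C) {φ ψ : Y → ℝ} (hφ : Integrable φ μ) (hψ : Integrable ψ μ) :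
    dist (∫ x, f x * φ (e x) ∂ν) (∫ x, f x * ψ (e x) ∂ν) ≤ C * ∫ y, ‖φ y - ψ y‖ ∂μ := by
  subst hνμ
  have hmul {χ : Y → ℝ} (hχ : Integrable χ (ν.map e)) : Integrable (fun x => f x * χ (e x)) ν :=
    (hχ.comp_aemeasurable he).bdd_mul hf (.of_forall hfC)
  have hdiff : Integrable (fun x => C * ‖φ (e x) - ψ (e x)‖) ν :=
    (((hφ.sub hψ).comp_aemeasurable he).norm).const_mul C
  calc dist (∫ x, f x * φ (e x) ∂ν) (∫ x, f x * ψ (e x) ∂ν)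
      = ‖∫ x, f x * (φ (e x) - ψ (e x)) ∂ν‖ := by
        simp only [dist_eq_norm, mul_sub, integral_sub (hmul hφ) (hmul hψ)]
    _ ≤ ∫ x, C * ‖φ (e x) - ψ (e x)‖ ∂ν :=
        norm_integral_le_of_norm_le hdiff <| .of_forall fun x => by
          rw [norm_mul]
          exact mul_le_mul_of_nonneg_right (hfC x) (norm_nonneg _)
    _ = C * ∫ y, ‖φ y - ψ y‖ ∂(ν.map e) := by
        rw [integral_const_mul,
          integral_map he (f := fun y => ‖φ y - ψ y‖) (hφ.sub hψ).aestronglyMeasurable.norm]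

end

theorem tendsto_integral_mul_comp_of_map_eq {X Y ι : Type*}
    [TopologicalSpace X] [MeasurableSpace X] [OpensMeasurableSpace X]
    [TopologicalSpace Y] [NormalSpace Y] [MeasurableSpace Y] [BorelSpace Y]
    {l : Filter ι} {νs : ι → Measure X} {ν : Measure X} [∀ i, IsFiniteMeasure (νs i)]
    [IsFiniteMeasure ν] {e : X → Y} [(ν.map e).WeaklyRegular] (he : Continuous e)
    (hmap : ∀ i, (νs i).map e = ν.map e)
    (hconv : ∀ f : X →ᵇ ℝ, Tendsto (fun i => ∫ x, f x ∂(νs i)) l (𝓝 (∫ x, f x ∂ν)))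
    (f : X →ᵇ ℝ) {φ : Y → ℝ} (hφ : Integrable φ (ν.map e)) :
    Tendsto (fun i => ∫ x, f x * φ (e x) ∂(νs i)) l (𝓝 (∫ x, f x * φ (e x) ∂ν)) := by
  refine tendsto_of_forall_approx fun δ hδ => ?_
  set C := ‖f‖ + 1
  obtain ⟨g, hφg, -⟩ := hφ.exists_boundedContinuous_integral_sub_le (ε := δ / C) (by positivity)
  have hfC (x : X) : ‖f x‖ ≤ C := (f.norm_coe_le_norm x).trans (le_add_of_nonneg_right zero_le_one)
  have hbound {ν' : Measure X} (hν' : ν'.map e = ν.map e) :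
      dist (∫ x, f x * φ (e x) ∂ν') (∫ x, f x * g (e x) ∂ν') ≤ δ := by
    calc _ ≤ C * ∫ y, ‖φ y - g y‖ ∂(ν.map e) :=
          dist_integral_mul_comp_le he.aemeasurable hν' f.continuous.aestronglyMeasurable hfC hφ
            (g.integrable _)
      _ ≤ C * (δ / C) := by gcongr
      _ = δ := mul_div_cancel₀ δ (by positivity)
  exact ⟨_, _, hconv (f * g.compContinuous ⟨e, he⟩), fun i => hbound (hmap i), hbound rfl⟩

/-- Let `Ω` be Polish and `π_k, π` Borel probability measures on `Ω²` all
with the same first marginal.  If `π_k → π` weakly, then for every Borel set `G ⊆ Ω` the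
restrictions `π_k⌊(G × Ω)` converge weakly to `π⌊(G × Ω)`. -/
theorem restriction_weak_convergence {Ω : Type*}
    [MeasurableSpace Ω] [TopologicalSpace Ω] [PolishSpace Ω] [BorelSpace Ω]
    (πk : ℕ → Measure (Ω × Ω)) (π : Measure (Ω × Ω))
    [∀ k, IsProbabilityMeasure (πk k)] [IsProbabilityMeasure π]
    (hmarg : ∀ k, (πk k).map Prod.fst = π.map Prod.fst)
    (hconv : ∀ f : BoundedContinuousFunction (Ω × Ω) ℝ,
      Tendsto (fun k => ∫ p, f p ∂(πk k)) atTop (𝓝 (∫ p, f p ∂π))) :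
    ∀ G : Set Ω, MeasurableSet G →
      ∀ f : BoundedContinuousFunction (Ω × Ω) ℝ,
        Tendsto (fun k => ∫ p, f p ∂((πk k).restrict (G ×ˢ (univ : Set Ω)))) atTop
          (𝓝 (∫ p, f p ∂(π.restrict (G ×ˢ (univ : Set Ω))))) := by
  intro G hG f
  simp only [prod_univ, integral_restrict_preimage_eq_integral_mul_indicator measurable_fst hG]
  exact tendsto_integral_mul_comp_of_map_eq continuous_fst hmarg hconv f
    ((integrable_const 1).indicator hG)
end

section
/- Let π be a Borel probability measure on ℝⁿ × ℝⁿ concentrated on a σ-compact set Γ, and suppose the first marginal μ₁ of π is absolutely continuous with respect to ℒⁿ with density f. Then π is concentrated on the set DR(Γ) of density-regular points of Γ. -/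
open MeasureTheory Set Metric Filter Topology ENNReal NNReal

noncomputable section

/-- `x` is a Lebesgue point of `g : ℝⁿ → [0, ∞]`: the averages of `g` on small balls around
`x` converge to `g x`. -/
def LebPoint {n : ℕ} (g : Eucl n → ℝ≥0∞) (x : Eucl n) : Prop :=
  Tendsto (fun r : ℝ => (∫⁻ y in Metric.ball x r, g y ∂volume) / volume (Metric.ball x r))
    (𝓝[>] (0:ℝ)) (𝓝 (g x))

/-- A point `(x, y) ∈ Γ` is density-regular (w.r.t. a measure `π` concentrated on `Γ` whose
first marginal has density `f`): for every `r > 0` there are `ỹ` and `r̃ > 0` with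
`y ∈ B(ỹ, r̃) ⊆ B(y, r)` such that `x` is a Lebesgue point of `f` and of the density `f̃` of
the first marginal of `π⌊(ℝⁿ × B(ỹ, r̃))`, with `f x < ∞` and `f̃ x > 0`. -/
def DensityRegular {n : ℕ} (π : Measure (Eucl n × Eucl n)) (f : Eucl n → ℝ≥0∞)
    (Γ : Set (Eucl n × Eucl n)) (p : Eucl n × Eucl n) : Prop :=
  p ∈ Γ ∧ ∀ r > (0:ℝ), ∃ ytil : Eucl n, ∃ rtil > (0:ℝ),
    p.2 ∈ Metric.ball ytil rtil ∧ Metric.ball ytil rtil ⊆ Metric.ball p.2 r ∧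
    LebPoint f p.1 ∧
    LebPoint
      (((π.restrict ((univ : Set (Eucl n)) ×ˢ Metric.ball ytil rtil)).map Prod.fst).rnDeriv
        volume) p.1 ∧
    f p.1 < ⊤ ∧
    0 < ((π.restrict ((univ : Set (Eucl n)) ×ˢ Metric.ball ytil rtil)).map Prod.fst).rnDeriv
      volume p.1

/-- The set of density-regular points of `Γ`. -/
def DR {n : ℕ} (π : Measure (Eucl n × Eucl n)) (f : Eucl n → ℝ≥0∞)
    (Γ : Set (Eucl n × Eucl n)) : Set (Eucl n × Eucl n) :=
  {p | DensityRegular π f Γ p}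


/-- For a measure absolutely continuous w.r.t. Lebesgue, open and closed balls of positive
radius have the same measure. -/
lemma meas_ball_eq_closedBall {n : ℕ} (ρ : Measure (Eucl n)) (hρ : ρ ≪ volume)
    (x : Eucl n) {r : ℝ} (hr : 0 < r) :
    ρ (Metric.ball x r) = ρ (Metric.closedBall x r) := by
  have hs : ρ (Metric.sphere x r) = 0 :=
    hρ (Measure.addHaar_sphere_of_ne_zero volume x hr.ne')
  refine le_antisymm (measure_mono Metric.ball_subset_closedBall) ?_
  calc ρ (Metric.closedBall x r) = ρ (Metric.ball x r ∪ Metric.sphere x r) := by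
        rw [Metric.ball_union_sphere]
    _ ≤ ρ (Metric.ball x r) + ρ (Metric.sphere x r) := measure_union_le _ _
    _ = ρ (Metric.ball x r) := by rw [hs, add_zero]

/-- Almost every point is a Lebesgue point of an integrable `ℝ≥0∞`-valued function. -/
lemma ae_lebPoint {n : ℕ} {g : Eucl n → ℝ≥0∞} (hg : Measurable g)
    (hint : (∫⁻ x, g x ∂(volume : Measure (Eucl n))) ≠ ∞) :
    ∀ᵐ x ∂(volume : Measure (Eucl n)), LebPoint g x := by
  set ρ := (volume : Measure (Eucl n)).withDensity g with hρdef
  haveI : IsFiniteMeasure ρ := isFiniteMeasure_withDensity hint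
  have habs : ρ ≪ volume := withDensity_absolutelyContinuous _ _
  filter_upwards [Besicovitch.ae_tendsto_rnDeriv ρ volume,
    Measure.rnDeriv_withDensity (volume : Measure (Eucl n)) hg] with x hx hx2
  rw [hx2] at hx
  rw [LebPoint]
  refine hx.congr' ?_
  filter_upwards [self_mem_nhdsWithin] with r (hr : 0 < r)
  have h1 : ρ (Metric.ball x r) = ρ (Metric.closedBall x r) :=
    meas_ball_eq_closedBall ρ habs x hr
  have h2 : volume (Metric.ball x r) = volume (Metric.closedBall x r) :=
    meas_ball_eq_closedBall volume (Measure.AbsolutelyContinuous.refl _) x hr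
  rw [← withDensity_apply g measurableSet_ball, ← hρdef, h1, h2]

/-- If `π` is a Borel probability measure on `ℝⁿ × ℝⁿ` concentrated on a
`σ`-compact set `Γ` and its first marginal is absolutely continuous with density `f`, then
`π` is concentrated on the set `DR(Γ)` of density-regular points of `Γ`. -/
theorem concentrated_on_densityRegular {n : ℕ}
    (π : Measure (Eucl n × Eucl n)) [IsProbabilityMeasure π]
    (Γ : Set (Eucl n × Eucl n)) (hΓ : IsSigmaCompact Γ) (hconc : π Γᶜ = 0)
    (f : Eucl n → ℝ≥0∞) (hf : Measurable f)
    (hμ₁ : π.map Prod.fst = volume.withDensity f) :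
    ∃ S : Set (Eucl n × Eucl n), MeasurableSet S ∧ S ⊆ DR π f Γ ∧ π S = 1 := by
  classical
  obtain ⟨D, Dct, Ddense⟩ := TopologicalSpace.exists_countable_dense (Eucl n)
  haveI := Dct.to_subtype
  -- the countable family of balls
  let B : ↥D × ℕ → Set (Eucl n) := fun i => Metric.ball (i.1 : Eucl n) (1 / (i.2 + 1))
  let μi : ↥D × ℕ → Measure (Eucl n) := fun i =>
    (π.restrict ((univ : Set (Eucl n)) ×ˢ B i)).map Prod.fst
  let fi : ↥D × ℕ → Eucl n → ℝ≥0∞ := fun i => (μi i).rnDeriv volume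
  let Z : ↥D × ℕ → Set (Eucl n) := fun i => {x | fi i x = 0}
  haveI hfin : ∀ i, IsFiniteMeasure (μi i) := fun i => by
    constructor
    rw [Measure.map_apply measurable_fst MeasurableSet.univ]
    exact measure_lt_top _ _
  have hle : ∀ i, μi i ≤ π.map Prod.fst := fun i =>
    Measure.map_mono Measure.restrict_le_self measurable_fst
  have habs1 : π.map Prod.fst ≪ (volume : Measure (Eucl n)) := by
    rw [hμ₁]; exact withDensity_absolutelyContinuous _ _
  have habs : ∀ i, μi i ≪ (volume : Measure (Eucl n)) := fun i =>
    (Measure.absolutelyContinuous_of_le (hle i)).trans habs1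
  have hI : (∫⁻ x, f x ∂(volume : Measure (Eucl n))) = 1 := by
    have h0 : (volume : Measure (Eucl n)).withDensity f univ = 1 := by
      rw [← hμ₁, Measure.map_apply measurable_fst MeasurableSet.univ, Set.preimage_univ,
        measure_univ]
    rwa [withDensity_apply _ MeasurableSet.univ, setLIntegral_univ] at h0
  have hG : ∀ᵐ x ∂(volume : Measure (Eucl n)),
      LebPoint f x ∧ f x < ⊤ ∧ ∀ i, LebPoint (fi i) x := by
    refine (ae_lebPoint hf (by rw [hI]; exact one_ne_top)).and
      ((ae_lt_top hf (by rw [hI]; exact one_ne_top)).and ?_)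
    rw [ae_all_iff]
    intro i
    exact ae_lebPoint (Measure.measurable_rnDeriv _ _)
      (Measure.lintegral_rnDeriv_lt_top (μi i) volume).ne
  set N : Set (Eucl n) := toMeasurable volume
    {x | ¬ (LebPoint f x ∧ f x < ⊤ ∧ ∀ i, LebPoint (fi i) x)} with hNdef
  have hNm : MeasurableSet N := measurableSet_toMeasurable _ _
  have hN0 : volume N = 0 := by
    rw [hNdef, measure_toMeasurable]
    exact hG
  have hNP : ∀ x, x ∉ N → LebPoint f x ∧ f x < ⊤ ∧ ∀ i, LebPoint (fi i) x := by
    intro x hx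
    by_contra h
    exact hx (subset_toMeasurable _ _ h)
  have hZm : ∀ i, MeasurableSet (Z i) := fun i =>
    Measure.measurable_rnDeriv (μi i) volume (measurableSet_singleton 0)
  have hZB : ∀ i, π (Z i ×ˢ B i) = 0 := by
    intro i
    have h3 : μi i (Z i) = 0 := by
      conv_lhs => rw [← Measure.withDensity_rnDeriv_eq (μi i) volume (habs i)]
      rw [withDensity_apply _ (hZm i), lintegral_eq_zero_iff (Measure.measurable_rnDeriv _ _)]
      exact (ae_restrict_iff' (hZm i)).mpr (ae_of_all _ fun x hx => hx)
    have h2 : (π.restrict ((univ : Set (Eucl n)) ×ˢ B i)) (Z i ×ˢ univ) = μi i (Z i) := by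
      rw [Measure.map_apply measurable_fst (hZm i), Set.prod_univ]
    have h1 : π (Z i ×ˢ B i) = (π.restrict ((univ : Set (Eucl n)) ×ˢ B i)) (Z i ×ˢ univ) := by
      rw [Measure.restrict_apply ((hZm i).prod MeasurableSet.univ), Set.prod_inter_prod,
        Set.inter_univ, Set.univ_inter]
    rw [h1, h2, h3]
  have hΓm : MeasurableSet Γ := by
    obtain ⟨K, hK, rfl⟩ := hΓ
    exact MeasurableSet.iUnion fun k => (hK k).isClosed.measurableSet
  refine ⟨(Γ ∩ (N ×ˢ (univ : Set (Eucl n)))ᶜ) ∩ (⋃ i, Z i ×ˢ B i)ᶜ,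
    (hΓm.inter (hNm.prod MeasurableSet.univ).compl).inter
      (MeasurableSet.iUnion fun i => (hZm i).prod measurableSet_ball).compl, ?_, ?_⟩
  · -- the set is contained in DR
    rintro ⟨x, y⟩ ⟨⟨hxyΓ, hxN⟩, hxZ⟩
    have hP := hNP x (fun h => hxN ⟨h, mem_univ y⟩)
    refine ⟨hxyΓ, ?_⟩
    intro r hr
    obtain ⟨m, hm⟩ := exists_nat_gt (2 / r)
    have hm0 : (0:ℝ) < (m:ℝ) + 1 := by positivity
    have hm1 : (0:ℝ) < 1 / ((m:ℝ) + 1) := by positivity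
    have hm2 : 2 / ((m:ℝ) + 1) < r := by
      rw [div_lt_iff₀ hm0]
      rw [div_lt_iff₀ hr] at hm
      nlinarith
    obtain ⟨q, hqD, hq⟩ := Ddense.exists_dist_lt y hm1
    have hyB : y ∈ Metric.ball q (1 / ((m:ℝ) + 1)) := Metric.mem_ball.mpr hq
    refine ⟨q, 1 / ((m:ℝ) + 1), hm1, hyB, ?_, hP.1, ?_, hP.2.1, ?_⟩
    · intro z hz
      rw [Metric.mem_ball] at hz ⊢
      have : dist z y ≤ dist z q + dist q y := dist_triangle z q y
      rw [dist_comm q y] at this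
      calc dist z y ≤ dist z q + dist y q := this
        _ < 1 / ((m:ℝ) + 1) + 1 / ((m:ℝ) + 1) := add_lt_add hz hq
        _ = 2 / ((m:ℝ) + 1) := by ring
        _ < r := hm2
    · exact hP.2.2 (⟨q, hqD⟩, m)
    · rw [pos_iff_ne_zero]
      intro h0
      exact hxZ (mem_iUnion.mpr ⟨(⟨q, hqD⟩, m), ⟨h0, hyB⟩⟩)
  · -- full measure
    rw [← prob_compl_eq_zero_iff ((hΓm.inter (hNm.prod MeasurableSet.univ).compl).inter
      (MeasurableSet.iUnion fun i => (hZm i).prod measurableSet_ball).compl)]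
    have hNπ : π (N ×ˢ (univ : Set (Eucl n))) = 0 := by
      have h := habs1 hN0
      rw [Measure.map_apply measurable_fst hNm] at h
      rw [Set.prod_univ]
      exact h
    have hUπ : π (⋃ i, Z i ×ˢ B i) = 0 := measure_iUnion_null hZB
    rw [Set.compl_inter, Set.compl_inter, compl_compl, compl_compl]
    exact measure_union_null (measure_union_null hconc hNπ) hUπ
end
end
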